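/- Let 𝔥 = ⊕_{i∈I} 𝔥^i where each 𝔥^i is non-empty and indecomposable. Given a family (ψ^i)_{i∈I} with ψ^i ∈ Aut*(𝔥^i) such that ψ^i(x) = ψ^j(x) whenever x ∈ V_f(𝔥^i) ∩ V_f(𝔥^j), the map ψ: V(𝔥) → V(𝔥) defined by ψ(x) = ψ^i(x) for x ∈ V(𝔥^i) is well-defined and is an automorphism of 𝔥 fixing all slim vertices. -/

import Mathlib

/-- A Hoffman graph: a finite simple graph with vertices labeled slim or fat,
fat vertices pairwise non-adjacent, each fat vertex with a slim neighbor. -/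
structure HoffmanGraph (V : Type) where
  adj : V → V → Prop
  symm : Symmetric adj
  irrefl : Irreflexive adj
  slim : V → Prop
  fat_slim_nbr : ∀ x, ¬ slim x → ∃ y, slim y ∧ adj x y
  fat_not_adj : ∀ x y, ¬ slim x → ¬ slim y → ¬ adj x y

namespace HoffmanGraph

variable {V W U : Type}

def slimSet (H : HoffmanGraph V) : Set V := {x | H.slim x}

def toSimple (H : HoffmanGraph V) : SimpleGraph V where
  Adj := H.adj
  symm := ⟨by intro a b h; exact H.symm h⟩
  loopless := ⟨by intro a h; exact H.irrefl a h⟩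

/-- common fat neighbours of `x` and `y` within the carrier set `S`. -/
def fatCommonOn (H : HoffmanGraph V) (S : Set V) (x y : V) : Set V :=
  {z | z ∈ S ∧ ¬ H.slim z ∧ H.adj x z ∧ H.adj y z}

/-- The induced Hoffman subgraph of `H` on `S` is the sum of the induced subgraphs
on the sets `P i`. -/
def IsSumOn (H : HoffmanGraph V) (S : Set V) {ι : Type} (P : ι → Set V) : Prop :=
  (∀ i, P i ⊆ S) ∧
  (⋃ i, P i) = S ∧
  (∀ x ∈ S, H.slim x → ∃! i, x ∈ P i) ∧
  (∀ i, ∀ x ∈ P i, H.slim x → ∀ z ∈ S, ¬ H.slim z → H.adj x z → z ∈ P i) ∧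
  (∀ i, ∀ z ∈ P i, ¬ H.slim z → ∃ x ∈ P i, H.slim x ∧ H.adj z x) ∧
  (∀ i j, i ≠ j → ∀ x ∈ P i, ∀ y ∈ P j, H.slim x → H.slim y →
    (H.fatCommonOn S x y).ncard ≤ 1 ∧ ((H.fatCommonOn S x y).ncard = 1 ↔ H.adj x y))

/-- Binary sum. -/
def IsSumOn2 (H : HoffmanGraph V) (S A B : Set V) : Prop :=
  H.IsSumOn S (fun b : Bool => if b then A else B)

/-- The induced Hoffman subgraph on `S` is non-empty and not a sum of two non-empty
Hoffman subgraphs. -/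
def Indecomposable (H : HoffmanGraph V) (S : Set V) : Prop :=
  S.Nonempty ∧ ∀ A B : Set V, A.Nonempty → B.Nonempty → ¬ H.IsSumOn2 S A B

/-- `⟪X⟫`: `X` together with the fat neighbours (inside the carrier `S`) of its members. -/
def hind (H : HoffmanGraph V) (S X : Set V) : Set V :=
  X ∪ {z | z ∈ S ∧ ¬ H.slim z ∧ ∃ x ∈ X, H.adj x z}

/-- `e` is an isomorphism of Hoffman graphs. -/
def IsIso (H : HoffmanGraph V) (K : HoffmanGraph W) (e : V ≃ W) : Prop :=
  (∀ x y, H.adj x y ↔ K.adj (e x) (e y)) ∧ ∀ x, (H.slim x ↔ K.slim (e x))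

/-- `K` is isomorphic to the induced Hoffman subgraph of `L` on `S`. -/
def IsoToInduced (K : HoffmanGraph W) (L : HoffmanGraph U) (S : Set U) : Prop :=
  ∃ e : W ≃ S, (∀ x y, K.adj x y ↔ L.adj (e x).1 (e y).1) ∧ ∀ x, (K.slim x ↔ L.slim (e x).1)

/-- `K` is isomorphic to an induced Hoffman subgraph of `L`. -/
def IsSubgraphOf (K : HoffmanGraph W) (L : HoffmanGraph U) : Prop :=
  ∃ S : Set U, IsoToInduced K L S

/-- The induced Hoffman subgraph on `S` is (isomorphic to) `𝔥₂`:
one slim vertex adjacent to two fat vertices. -/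
def IsH2On (H : HoffmanGraph V) (S : Set V) : Prop :=
  ∃ s f₁ f₂ : V, f₁ ≠ f₂ ∧ S = {s, f₁, f₂} ∧ H.slim s ∧ ¬ H.slim f₁ ∧ ¬ H.slim f₂ ∧
    H.adj s f₁ ∧ H.adj s f₂

/-- The induced Hoffman subgraph on `S` belongs to the family `𝔒`: it is `𝔥₂` or an
indecomposable fat Hoffman graph with at least 2 slim vertices and exactly one fat vertex. -/
def MemO (H : HoffmanGraph V) (S : Set V) : Prop :=
  H.IsH2On S ∨
  (H.Indecomposable S ∧ 2 ≤ (S ∩ H.slimSet).ncard ∧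
    ∃ w ∈ S, ¬ H.slim w ∧ (∀ z ∈ S, ¬ H.slim z → z = w) ∧ ∀ x ∈ S, H.slim x → H.adj x w)

/-- The induced Hoffman subgraph of `L` on `S` is isomorphic to a member of the family `ℋ`. -/
def MemFam (ℋ : ∀ W : Type, HoffmanGraph W → Prop) (L : HoffmanGraph U) (S : Set U) : Prop :=
  ∃ (W : Type) (K : HoffmanGraph W), ℋ W K ∧ IsoToInduced K L S

/-- `K` is a sum of members of `ℋ`. -/
def IsCoverGraph (ℋ : ∀ W : Type, HoffmanGraph W → Prop) (K : HoffmanGraph U) : Prop :=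
  ∃ (n : ℕ) (P : Fin n → Set U), K.IsSumOn Set.univ P ∧ ∀ i, MemFam ℋ K (P i)

/-- `G` is a slim `ℋ`-line graph. -/
def IsSlimLine (ℋ : ∀ W : Type, HoffmanGraph W → Prop) {V : Type} (G : SimpleGraph V) : Prop :=
  ∃ (U : Type) (K : HoffmanGraph U) (ι : V → U), Finite U ∧ Function.Injective ι ∧
    (∀ a, K.slim (ι a)) ∧ (∀ a b, G.Adj a b ↔ K.adj (ι a) (ι b)) ∧ IsCoverGraph ℋ K

/-- `K` (with slim vertices identified with `V(G)` via `ι`) is a strict `ℋ`-cover of `G`. -/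
def IsStrictCover (ℋ : ∀ W : Type, HoffmanGraph W → Prop) {V U : Type}
    (G : SimpleGraph V) (K : HoffmanGraph U) (ι : V → U) : Prop :=
  Finite U ∧ Function.Injective ι ∧ (∀ a b, G.Adj a b ↔ K.adj (ι a) (ι b)) ∧
  (∀ u, K.slim u ↔ ∃ a, ι a = u) ∧ IsCoverGraph ℋ K

/-- Two strict covers are equivalent: an isomorphism restricting to the identity on `G`. -/
def EquivCovers {V U U' : Type} (K : HoffmanGraph U) (ι : V → U)
    (K' : HoffmanGraph U') (ι' : V → U') : Prop :=
  ∃ φ : U ≃ U', IsIso K K' φ ∧ ∀ a, φ (ι a) = ι' a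

/-- The family `ℋ̄ = {𝔥₂} ∪ {𝔤 ∈ 𝔒 : 𝔤 is a Hoffman subgraph of a member of ℋ}`. -/
def BarFam (ℋ : ∀ W : Type, HoffmanGraph W → Prop) : ∀ W : Type, HoffmanGraph W → Prop :=
  fun _ K => K.IsH2On Set.univ ∨
    (K.MemO Set.univ ∧ ∃ (U : Type) (L : HoffmanGraph U), ℋ U L ∧ IsSubgraphOf K L)

/-- `G` has a strict `ℱ`-cover and it is unique up to equivalence. -/
def UniqueStrictCover (ℱ : ∀ W : Type, HoffmanGraph W → Prop) {V : Type}
    (G : SimpleGraph V) : Prop :=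
  (∃ (U : Type) (K : HoffmanGraph U) (ι : V → U), IsStrictCover ℱ G K ι) ∧
  ∀ (U U' : Type) (K : HoffmanGraph U) (K' : HoffmanGraph U') (ι : V → U) (ι' : V → U'),
    IsStrictCover ℱ G K ι → IsStrictCover ℱ G K' ι' → EquivCovers K ι K' ι'

end HoffmanGraph
open HoffmanGraph in
/-- Compatible automorphisms of the addends of `𝔥 = ⊕ᵢ 𝔥^i` (fixing slim vertices and
agreeing on common fat vertices) glue to an automorphism of `𝔥` fixing all slim
vertices. -/
theorem stmt10 {V : Type} [Fintype V] (H : HoffmanGraph V) {ι : Type} (P : ι → Set V)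
    (hsum : H.IsSumOn Set.univ P) (hind : ∀ i, H.Indecomposable (P i))
    (ψi : ι → V → V)
    (hbij : ∀ i, Set.BijOn (ψi i) (P i) (P i))
    (hadjp : ∀ i, ∀ x ∈ P i, ∀ y ∈ P i, (H.adj x y ↔ H.adj (ψi i x) (ψi i y)))
    (hslimp : ∀ i, ∀ x ∈ P i, (H.slim x ↔ H.slim (ψi i x)))
    (hfixp : ∀ i, ∀ x ∈ P i, H.slim x → ψi i x = x)
    (hcompat : ∀ i j, ∀ x, x ∈ P i → x ∈ P j → ψi i x = ψi j x) :
    ∃ ψ : V ≃ V, IsIso H H ψ ∧ (∀ x, H.slim x → ψ x = x) ∧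
      ∀ i, ∀ x ∈ P i, ψ x = ψi i x := by
  obtain ⟨h1, h2, h3, h4, h5, h6⟩ := hsum
  have hmem : ∀ x : V, ∃ i, x ∈ P i := by
    intro x
    have hx : x ∈ ⋃ i, P i := h2.symm ▸ Set.mem_univ x
    exact Set.mem_iUnion.mp hx
  choose idx hidx using hmem
  set f : V → V := fun x => ψi (idx x) x with hf
  have hfeq : ∀ i x, x ∈ P i → f x = ψi i x := fun i x hx =>
    hcompat (idx x) i x (hidx x) hx
  -- key: common preimage in intersections
  have hT : ∀ i j (z : V), z ∈ P i → z ∈ P j → ∃ c, c ∈ P i ∧ c ∈ P j ∧ ψi i c = z := by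
    intro i j z hzi hzj
    have hmap : Set.MapsTo (ψi i) (P i ∩ P j) (P i ∩ P j) := by
      rintro x ⟨hxi, hxj⟩
      exact ⟨(hbij i).1 hxi, hcompat i j x hxi hxj ▸ (hbij j).1 hxj⟩
    have hinj : Set.InjOn (ψi i) (P i ∩ P j) :=
      (hbij i).2.1.mono Set.inter_subset_left
    have hbijT := (Set.toFinite (P i ∩ P j)).injOn_iff_bijOn_of_mapsTo hmap |>.mp hinj
    obtain ⟨c, hc, hcz⟩ := hbijT.2.2 ⟨hzi, hzj⟩
    exact ⟨c, hc.1, hc.2, hcz⟩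
  have hinjf : Function.Injective f := by
    intro a b hab
    have hai : a ∈ P (idx a) := hidx a
    have hbj : b ∈ P (idx b) := hidx b
    have hz1 : ψi (idx a) a ∈ P (idx a) := (hbij (idx a)).1 hai
    have hz2 : ψi (idx a) a ∈ P (idx b) := by
      rw [show ψi (idx a) a = ψi (idx b) b from hab]
      exact (hbij (idx b)).1 hbj
    obtain ⟨c, hci, hcj, hcz⟩ := hT (idx a) (idx b) _ hz1 hz2
    have hca : c = a := (hbij (idx a)).2.1 hci hai hcz
    have hcb : c = b := by
      refine (hbij (idx b)).2.1 hcj hbj ?_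
      rw [← hcompat (idx a) (idx b) c hci hcj, hcz]
      exact hab
    rw [← hca, hcb]
  have hsurjf : Function.Surjective f := by
    intro z
    obtain ⟨x, hx, hxz⟩ := (hbij (idx z)).2.2 (hidx z)
    exact ⟨x, (hfeq (idx z) x hx).trans hxz⟩
  have hslimf : ∀ x, H.slim x ↔ H.slim (f x) := fun x => hslimp (idx x) x (hidx x)
  have hfixf : ∀ x, H.slim x → f x = x := fun x hs => hfixp (idx x) x (hidx x) hs
  -- adjacency preserved
  have hadjf : ∀ x y, H.adj x y ↔ H.adj (f x) (f y) := by
    intro x y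
    by_cases hyx : y ∈ P (idx x)
    · rw [hfeq (idx x) y hyx]
      exact hadjp (idx x) x (hidx x) y hyx
    by_cases hxy : x ∈ P (idx y)
    · rw [hfeq (idx y) x hxy]
      exact hadjp (idx y) x hxy y (hidx y)
    by_cases hsx : H.slim x
    · by_cases hsy : H.slim y
      · rw [hfixf x hsx, hfixf y hsy]
      · -- x slim, y fat, y ∉ P (idx x)
        constructor
        · intro hadj
          exact absurd (h4 (idx x) x (hidx x) hsx y (Set.mem_univ y) hsy hadj) hyx
        · intro hadj
          rw [hfixf x hsx] at hadj
          have hfy : ¬ H.slim (f y) := fun h => hsy ((hslimf y).mpr h)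
          have hfyi : f y ∈ P (idx x) :=
            h4 (idx x) x (hidx x) hsx (f y) (Set.mem_univ _) hfy hadj
          have hfyj : f y ∈ P (idx y) := (hbij (idx y)).1 (hidx y)
          obtain ⟨c, hci, hcj, hcz⟩ := hT (idx x) (idx y) (f y) hfyi hfyj
          have : c = y := by
            refine (hbij (idx y)).2.1 hcj (hidx y) ?_
            rw [← hcompat (idx x) (idx y) c hci hcj, hcz]
          exact absurd (this ▸ hci) hyx
    · by_cases hsy : H.slim y
      · -- x fat, y slim, x ∉ P (idx y)
        constructor
        · intro hadj
          exact absurd (h4 (idx y) y (hidx y) hsy x (Set.mem_univ x) hsx (H.symm hadj)) hxy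
        · intro hadj
          rw [hfixf y hsy] at hadj
          have hfx : ¬ H.slim (f x) := fun h => hsx ((hslimf x).mpr h)
          have hfxi : f x ∈ P (idx y) :=
            h4 (idx y) y (hidx y) hsy (f x) (Set.mem_univ _) hfx (H.symm hadj)
          have hfxj : f x ∈ P (idx x) := (hbij (idx x)).1 (hidx x)
          obtain ⟨c, hci, hcj, hcz⟩ := hT (idx y) (idx x) (f x) hfxi hfxj
          have : c = x := by
            refine (hbij (idx x)).2.1 hcj (hidx x) ?_
            rw [← hcompat (idx y) (idx x) c hci hcj, hcz]
          exact absurd (this ▸ hci) hxy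
      · -- both fat: never adjacent
        constructor
        · intro hadj; exact absurd hadj (H.fat_not_adj x y hsx hsy)
        · intro hadj
          exact absurd hadj (H.fat_not_adj _ _ (fun h => hsx ((hslimf x).mpr h))
            (fun h => hsy ((hslimf y).mpr h)))
  refine ⟨Equiv.ofBijective f ⟨hinjf, hsurjf⟩, ⟨hadjf, fun x => hslimf x⟩,
    fun x hs => hfixf x hs, fun i x hx => hfeq i x hx⟩
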